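/- arXiv:2501.10721 — 3 statements merged into one kernel-verified Lean document; each statement's English description precedes it below -/
import Mathlib

section
/- Let x ≥ 0 and y ≥ 0 be real numbers with x*y < 1. Then the family indexed by finitely supported functions n : ℕ → ℕ, sending n to ∏_{i ∈ supp(n)} (x^(i+1) * y^i)^(n i) / (n i)!, is summable with sum exp(x/(1 - x*y)). (That is, the grand-canonical partition function of the linear-polymer system, obtained by summing the Boltzmann weight of every ensemble of polymers, equals the ensemble generating function Z = e^F.) -/
set_option maxHeartbeats 1000000

open Finset Finsupp

/-- The equivalence between `ℕ × {n // n.support ⊆ s}` and `{n // n.support ⊆ insert j s}`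
for `j ∉ s`. -/
noncomputable def insertEquiv (j : ℕ) (s : Finset ℕ) (hj : j ∉ s) :
    ℕ × {n : ℕ →₀ ℕ // n.support ⊆ s} ≃ {n : ℕ →₀ ℕ // n.support ⊆ insert j s} where
  toFun p := ⟨Finsupp.single j p.1 + (p.2 : ℕ →₀ ℕ), by
    refine Finsupp.support_add.trans ?_
    intro i hi
    rcases Finset.mem_union.mp hi with hi | hi
    · exact Finset.mem_insert.mpr (Or.inl (Finset.mem_singleton.mp
        (Finsupp.support_single_subset hi)))
    · exact Finset.mem_insert.mpr (Or.inr (p.2.2 hi))⟩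
  invFun m := ((m : ℕ →₀ ℕ) j, ⟨(m : ℕ →₀ ℕ).erase j, by
    intro i hi
    rw [Finsupp.support_erase] at hi
    rcases Finset.mem_erase.mp hi with ⟨hij, hi⟩
    rcases Finset.mem_insert.mp (m.2 hi) with rfl | hi'
    · exact absurd rfl hij
    · exact hi'⟩)
  left_inv p := by
    obtain ⟨k, n, hn⟩ := p
    have hnj : (n : ℕ →₀ ℕ) j = 0 := Finsupp.notMem_support_iff.mp fun hmem => hj (hn hmem)
    ext
    · simp [hnj]
    · simp [Finsupp.erase_add, Finsupp.erase_single,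
        Finsupp.erase_of_notMem_support (Finsupp.notMem_support_iff.mpr hnj)]
  right_inv m := by
    ext1
    exact Finsupp.single_add_erase j (m : ℕ →₀ ℕ)

theorem hasSum_restrict (a : ℕ → ℝ) (ha : ∀ i, 0 ≤ a i) (s : Finset ℕ) :
    HasSum (fun n : {n : ℕ →₀ ℕ // n.support ⊆ s} =>
      ∏ i ∈ s, a i ^ ((n : ℕ →₀ ℕ) i) / ((n : ℕ →₀ ℕ) i).factorial)
      (∏ i ∈ s, Real.exp (a i)) := by
  classical
  induction s using Finset.induction_on with
  | empty =>
    have := hasSum_single (f := fun n : {n : ℕ →₀ ℕ // n.support ⊆ (∅ : Finset ℕ)} =>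
      ∏ i ∈ (∅ : Finset ℕ), a i ^ ((n : ℕ →₀ ℕ) i) / ((n : ℕ →₀ ℕ) i).factorial)
      (⟨0, by simp⟩ : {n : ℕ →₀ ℕ // n.support ⊆ (∅ : Finset ℕ)})
      (fun b hb => absurd (Subtype.ext (by
        ext i
        exact Finsupp.notMem_support_iff.mp fun hmem =>
          absurd (b.2 hmem) (Finset.notMem_empty i))) hb)
    simpa using this
  | @insert j s hj ih =>
    have hexp : HasSum (fun k : ℕ => a j ^ k / k.factorial) (Real.exp (a j)) := by
      rw [Real.exp_eq_exp_ℝ]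
      exact NormedSpace.expSeries_div_hasSum_exp (a j)
    have hnn1 : ∀ k : ℕ, 0 ≤ a j ^ k / k.factorial := fun k =>
      div_nonneg (pow_nonneg (ha j) k) (Nat.cast_nonneg _)
    have hnn2 : ∀ n : {n : ℕ →₀ ℕ // n.support ⊆ s},
        0 ≤ ∏ i ∈ s, a i ^ ((n : ℕ →₀ ℕ) i) / ((n : ℕ →₀ ℕ) i).factorial := fun n =>
      Finset.prod_nonneg fun i _ => div_nonneg (pow_nonneg (ha i) _) (Nat.cast_nonneg _)
    have hmul := hexp.mul ih (hexp.summable.mul_of_nonneg ih.summable hnn1 hnn2)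
    rw [← (insertEquiv j s hj).hasSum_iff, Finset.prod_insert hj]
    have hfun : ∀ p : ℕ × {n : ℕ →₀ ℕ // n.support ⊆ s},
        ((fun m : {n : ℕ →₀ ℕ // n.support ⊆ insert j s} =>
          ∏ i ∈ insert j s, a i ^ ((m : ℕ →₀ ℕ) i) / ((m : ℕ →₀ ℕ) i).factorial) ∘
            (insertEquiv j s hj)) p =
        (a j ^ p.1 / p.1.factorial) *
          ∏ i ∈ s, a i ^ ((p.2 : ℕ →₀ ℕ) i) / ((p.2 : ℕ →₀ ℕ) i).factorial := by
      rintro ⟨k, n, hn⟩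
      have hnj : (n : ℕ →₀ ℕ) j = 0 := Finsupp.notMem_support_iff.mp fun hmem => hj (hn hmem)
      simp only [Function.comp_apply, insertEquiv, Equiv.coe_fn_mk]
      rw [Finset.prod_insert hj]
      have h1 : (Finsupp.single j k + n) j = k := by simp [hnj]
      rw [h1]
      congr 1
      refine Finset.prod_congr rfl fun i hi => ?_
      have hij : i ≠ j := fun hij => hj (hij ▸ hi)
      simp [Finsupp.single_apply, hij.symm]
    rw [funext hfun]
    exact hmul

theorem linear_polymer_partition_function (x y : ℝ) (hx : 0 ≤ x) (hy : 0 ≤ y)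
    (h : x * y < 1) :
    HasSum
      (fun n : ℕ →₀ ℕ =>
        ∏ i ∈ n.support, (x ^ (i + 1) * y ^ i) ^ (n i) / (Nat.factorial (n i) : ℝ))
      (Real.exp (x / (1 - x * y))) := by
  classical
  set a : ℕ → ℝ := fun i => x ^ (i + 1) * y ^ i with ha_def
  have ha : ∀ i, 0 ≤ a i := fun i =>
    mul_nonneg (pow_nonneg hx _) (pow_nonneg hy _)
  set f : (ℕ →₀ ℕ) → ℝ := fun n =>
    ∏ i ∈ n.support, a i ^ (n i) / ((n i).factorial : ℝ) with hf_def
  have hfnn : ∀ n, 0 ≤ f n := fun n =>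
    Finset.prod_nonneg fun i _ => div_nonneg (pow_nonneg (ha i) _) (Nat.cast_nonneg _)
  have hf_ext : ∀ (n : ℕ →₀ ℕ) (s : Finset ℕ), n.support ⊆ s →
      f n = ∏ i ∈ s, a i ^ (n i) / ((n i).factorial : ℝ) := by
    intro n s hs
    refine Finset.prod_subset hs fun i _ hi => ?_
    rw [Finsupp.notMem_support_iff.mp hi]
    simp
  have haF : HasSum a (x / (1 - x * y)) := by
    have hgeo : HasSum (fun i : ℕ => (x * y) ^ i) (1 - x * y)⁻¹ :=
      hasSum_geometric_of_lt_one (mul_nonneg hx hy) h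
    have hx' := hgeo.mul_left x
    rw [← div_eq_mul_inv] at hx'
    have heq : a = fun i : ℕ => x * (x * y) ^ i :=
      funext fun i => by show x ^ (i + 1) * y ^ i = x * (x * y) ^ i; ring
    rw [heq]
    exact hx'
  have hFnn : ∀ s : Finset ℕ, ∑ i ∈ s, a i ≤ x / (1 - x * y) :=
    fun s => sum_le_hasSum s (fun i _ => ha i) haF
  refine hasSum_of_isLUB_of_nonneg _ hfnn ⟨?_, ?_⟩
  · -- upper bound
    rintro r ⟨t, rfl⟩
    set s : Finset ℕ := t.sup Finsupp.support with hs_def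
    have hsub : ∀ n ∈ t, n.support ⊆ s := fun n hn => Finset.le_sup hn
    have key := hasSum_restrict a ha s
    have hle : ∑ n ∈ t, f n ≤ ∏ i ∈ s, Real.exp (a i) := by
      have ht : (t.subtype fun n => n.support ⊆ s).map
          (Function.Embedding.subtype _) = t := Finset.subtype_map_of_mem hsub
      calc ∑ n ∈ t, f n
          = ∑ p ∈ t.subtype (fun n => n.support ⊆ s), f ↑p := by
            conv_lhs => rw [← ht]
            rw [Finset.sum_map]
            rfl
        _ = ∑ p ∈ t.subtype (fun n => n.support ⊆ s),
              ∏ i ∈ s, a i ^ ((p : ℕ →₀ ℕ) i) / (((p : ℕ →₀ ℕ) i).factorial : ℝ) :=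
            Finset.sum_congr rfl fun p _ => hf_ext _ s p.2
        _ ≤ ∏ i ∈ s, Real.exp (a i) :=
            sum_le_hasSum _ (fun p _ => Finset.prod_nonneg fun i _ =>
              div_nonneg (pow_nonneg (ha i) _) (Nat.cast_nonneg _)) key
    refine hle.trans ?_
    rw [← Real.exp_sum]
    exact Real.exp_le_exp.mpr (hFnn s)
  · -- least upper bound
    rintro b hb
    have hball : ∀ s : Finset ℕ, Real.exp (∑ i ∈ s, a i) ≤ b := by
      intro s
      rw [Real.exp_sum]
      refine hasSum_le_of_sum_le (hasSum_restrict a ha s) fun u => ?_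
      have hmem : ∑ n ∈ u.map (Function.Embedding.subtype fun n : ℕ →₀ ℕ => n.support ⊆ s),
          f n ≤ b := hb ⟨_, rfl⟩
      refine le_trans (le_of_eq ?_) hmem
      rw [Finset.sum_map]
      exact Finset.sum_congr rfl fun n _ => (hf_ext _ s n.2).symm
    have htend : Filter.Tendsto (fun s : Finset ℕ => Real.exp (∑ i ∈ s, a i))
        Filter.atTop (nhds (Real.exp (x / (1 - x * y)))) :=
      (Real.continuous_exp.continuousAt.tendsto).comp haF
    exact le_of_tendsto htend (Filter.Eventually.of_forall hball)
end

section
/- Let c > 0 and y > 0 be real numbers, and set x = ((2*c+1)*y + 1 - √((y-1)^2 + 4*(c+1)*y)) / (2*(c+1)*y^2). Then 0 < x*y < 1 and x/(1 - x*y)^2 + x*y/(1 - x*y) = c. (That is, this formula for x solves the mass-conservation equation of the polymers-with-rings system for the free-monomer activity x in terms of the total atom concentration c and the bond weight y.) -/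
theorem rings_mass_conservation (c y : ℝ) (hc : 0 < c) (hy : 0 < y)
    (x : ℝ)
    (hx : x = ((2 * c + 1) * y + 1 - Real.sqrt ((y - 1) ^ 2 + 4 * (c + 1) * y))
        / (2 * (c + 1) * y ^ 2)) :
    0 < x * y ∧ x * y < 1 ∧ x / (1 - x * y) ^ 2 + x * y / (1 - x * y) = c := by
  set s := Real.sqrt ((y - 1) ^ 2 + 4 * (c + 1) * y) with hs_def
  have hc1 : (0:ℝ) < c + 1 := by linarith
  have hD : (0:ℝ) ≤ (y - 1) ^ 2 + 4 * (c + 1) * y := by nlinarith [sq_nonneg (y-1), mul_pos hc1 hy]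
  have hs2 : s ^ 2 = (y - 1) ^ 2 + 4 * (c + 1) * y := Real.sq_sqrt hD
  have hs0 : 0 ≤ s := Real.sqrt_nonneg _
  have hd : (0:ℝ) < 2 * (c + 1) * y ^ 2 := by positivity
  have ht : (0:ℝ) ≤ (2 * c + 1) * y + 1 := by nlinarith
  have hst : s < (2 * c + 1) * y + 1 := by
    apply lt_of_pow_lt_pow_left₀ 2 ht
    nlinarith [mul_pos (mul_pos hc hc1) (mul_pos hy hy)]
  have hsy : 1 - y < s := by
    nlinarith [mul_pos hc1 hy]
  have hxpos : 0 < x := by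
    rw [hx]; apply div_pos; linarith; exact hd
  have hs_eq : s = (2 * c + 1) * y + 1 - 2 * (c + 1) * y ^ 2 * x := by
    rw [hx]; field_simp; ring
  have key : ((2 * c + 1) * y + 1 - 2 * (c + 1) * y ^ 2 * x) ^ 2
      = (y - 1) ^ 2 + 4 * (c + 1) * y := by rw [← hs_eq]; exact hs2
  have hxy1 : x * y < 1 := by
    rw [hx]
    rw [div_mul_eq_mul_div, div_lt_one hd]
    nlinarith
  refine ⟨mul_pos hxpos hy, hxy1, ?_⟩
  have h1 : 1 - x * y ≠ 0 := by linarith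
  field_simp
  ring_nf
  nlinarith [key, sq_nonneg y, mul_pos hy hy]
end

section
/- Fix a real number y, and let g : ℝ → ℝ be the function g(t) = exp(t/(1 - t*y)). Then for every real x with |x*y| < 1, the series ∑_{N=0}^∞ (iteratedDeriv N g 0 / N!) * x^N converges and its sum equals g(x). (That is, the ensemble generating function Z of the linear-polymer system equals its Taylor expansion Z = ∑_N Y_N x^N, whose coefficients Y_N = (1/N!)·dⁿZ/dxⁿ|_{x=0} are the canonical-ensemble partition functions for N atoms.) -/
theorem linear_polymer_taylor_expansion (y : ℝ)
    (g : ℝ → ℝ) (hg : g = fun t : ℝ => Real.exp (t / (1 - t * y)))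
    (x : ℝ) (h : |x * y| < 1) :
    HasSum (fun N : ℕ => (iteratedDeriv N g 0 / (Nat.factorial N : ℝ)) * x ^ N) (g x) := by
  set G : ℂ → ℂ := fun z => Complex.exp (z / (1 - z * (y : ℂ))) with hG
  -- choose a radius
  obtain ⟨r, hxr, hr⟩ : ∃ r : ℝ, |x| < r ∧ ∀ z : ℂ, ‖z‖ < r → 1 - z * (y : ℂ) ≠ 0 := by
    rcases eq_or_ne y 0 with hy | hy
    · exact ⟨|x| + 1, by linarith, fun z _ => by simp [hy]⟩
    · have hy' : (0:ℝ) < |y| := abs_pos.mpr hy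
      have hxlt : |x| < 1 / |y| := by
        rw [lt_div_iff₀ hy']
        simpa [abs_mul] using h
      refine ⟨(|x| + 1 / |y|) / 2, by linarith, fun z hz => ?_⟩
      have hz1 : ‖z‖ * |y| < 1 := by
        have : ‖z‖ < 1 / |y| := by
          have : (|x| + 1 / |y|) / 2 < 1 / |y| := by linarith
          linarith
        calc ‖z‖ * |y| < (1 / |y|) * |y| := by
              exact mul_lt_mul_of_pos_right this hy'
          _ = 1 := by field_simp
      intro hzero
      have : z * (y : ℂ) = 1 := by linear_combination -hzero
      have : ‖z * (y : ℂ)‖ = 1 := by rw [this]; simp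
      rw [norm_mul, Complex.norm_real, Real.norm_eq_abs] at this
      linarith
  have hr0 : 0 < r := lt_of_le_of_lt (abs_nonneg x) hxr
  -- G is differentiable on the ball
  have hGd : DifferentiableOn ℂ G (Metric.ball (0:ℂ) r) := by
    intro z hz
    have hz' : ‖z‖ < r := by simpa using mem_ball_zero_iff.mp hz
    have : DifferentiableAt ℂ G z := by
      apply DifferentiableAt.cexp
      exact (differentiableAt_id.div (by fun_prop) (hr z hz'))
    exact this.differentiableWithinAt
  have hGan : AnalyticOnNhd ℂ G (Metric.ball (0:ℂ) r) :=
    hGd.analyticOnNhd Metric.isOpen_ball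
  -- base relation between g and G on ℝ
  have hbase : ∀ t : ℝ, (g t : ℂ) = G ↑t := by
    intro t
    rw [hg]
    push_cast
    simp [hG]
  -- bridge: iterated derivatives agree
  have key : ∀ n : ℕ, ∀ t : ℝ, |t| < r → ((iteratedDeriv n g t : ℝ) : ℂ) = iteratedDeriv n G ↑t := by
    intro n
    induction n with
    | zero => intro t _; simpa using hbase t
    | succ n ih =>
      intro t ht
      have htball : (↑t : ℂ) ∈ Metric.ball (0:ℂ) r := by
        rw [mem_ball_zero_iff]
        simpa using ht
      -- iteratedDeriv n G is differentiable at ↑t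
      have hDG : DifferentiableAt ℂ (iteratedDeriv n G) ↑t := by
        have := (hGan.iterated_deriv n) ↑t htball
        rw [iteratedDeriv_eq_iterate]
        exact this.differentiableAt
      set D : ℂ := deriv (iteratedDeriv n G) ↑t with hD
      have hDt : HasDerivAt (iteratedDeriv n G) D ↑t := hDG.hasDerivAt
      have h1 : HasDerivAt (fun s : ℝ => iteratedDeriv n G ↑s) D t := hDt.comp_ofReal
      -- eventual equality near t
      have hev : (fun s : ℝ => iteratedDeriv n G ↑s) =ᶠ[nhds t]
          (fun s : ℝ => ((iteratedDeriv n g s : ℝ) : ℂ)) := by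
        have hopen : IsOpen {s : ℝ | |s| < r} := by
          have : {s : ℝ | |s| < r} = Set.Ioo (-r) r := by
            ext s; simp [abs_lt]
          rw [this]; exact isOpen_Ioo
        filter_upwards [hopen.mem_nhds (by simpa using ht)] with s hs
        exact (ih s hs).symm
      have h2 : HasDerivAt (fun s : ℝ => ((iteratedDeriv n g s : ℝ) : ℂ)) D t :=
        h1.congr_of_eventuallyEq hev.symm
      have h3 : HasDerivAt (iteratedDeriv n g) D.re t := by
        have := Complex.reCLM.hasFDerivAt.comp_hasDerivAt t h2
        simpa [Function.comp_def] using this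
      have h4 : HasDerivAt (fun s : ℝ => ((iteratedDeriv n g s : ℝ) : ℂ)) (↑(D.re) : ℂ) t := by
        have := Complex.ofRealCLM.hasFDerivAt.comp_hasDerivAt t h3
        simpa [Function.comp_def] using this
      have hDre : D = ↑(D.re) := h2.unique h4
      rw [iteratedDeriv_succ, iteratedDeriv_succ, h3.deriv, ← hD, hDre]
      simp
  -- apply complex Taylor series
  have hxball : (↑x : ℂ) ∈ Metric.ball (0:ℂ) r := by
    rw [mem_ball_zero_iff]
    simpa using hxr
  have H := Complex.hasSum_taylorSeries_on_ball hGd hxball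
  have Hre := Complex.reCLM.hasSum H
  have hGx : G ↑x = (g x : ℂ) := (hbase x).symm
  have h0 : ∀ n : ℕ, iteratedDeriv n G 0 = ((iteratedDeriv n g 0 : ℝ) : ℂ) := by
    intro n
    have := key n 0 (by simpa using hr0)
    simpa using this.symm
  have heq : (fun N : ℕ => (iteratedDeriv N g 0 / (Nat.factorial N : ℝ)) * x ^ N)
      = fun n : ℕ => Complex.reCLM ((n.factorial : ℂ)⁻¹ • ((x:ℂ) - 0) ^ n • iteratedDeriv n G 0) := by
    funext n
    rw [h0 n]
    have : ((n.factorial : ℂ))⁻¹ • ((x:ℂ) - 0) ^ n • ((iteratedDeriv n g 0 : ℝ) : ℂ)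
        = ((iteratedDeriv n g 0 / (Nat.factorial n : ℝ) * x ^ n : ℝ) : ℂ) := by
      simp only [smul_eq_mul, sub_zero]
      push_cast
      ring
    rw [this]
    simp only [Complex.reCLM_apply, Complex.ofReal_re]
  have hgx : g x = Complex.reCLM (G ↑x) := by rw [hGx]; simp
  rw [heq, hgx]
  exact Hre
end
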